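/- arXiv:1812.01927 — 2 statements merged into one kernel-verified Lean document; each statement's English description precedes it below -/
import Mathlib

section
/- For even n ≥ 2, both B_n^+(s,t) and B_n^-(s,t) are gamma positive with center of symmetry n/2: each equals Σ_i γ_i (st)^i (s+t)^{n-2i} with γ_i ≥ 0; moreover for odd n ≥ 2 neither polynomial is palindromic. -/
open Finset

/-- number of descents of a permutation of `Fin n` (one-line notation). -/
def desA {n : ℕ} (π : Equiv.Perm (Fin n)) : ℕ :=
  (Finset.univ.filter (fun i : Fin (n-1) =>
    π ⟨i.1+1, by have := i.2; omega⟩ < π ⟨i.1, by have := i.2; omega⟩)).card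

/-- number of ascents. -/
def ascA {n : ℕ} (π : Equiv.Perm (Fin n)) : ℕ :=
  (Finset.univ.filter (fun i : Fin (n-1) =>
    π ⟨i.1, by have := i.2; omega⟩ < π ⟨i.1+1, by have := i.2; omega⟩)).card

/-- number of inversions. -/
def invA {n : ℕ} (π : Equiv.Perm (Fin n)) : ℕ :=
  (Finset.univ.filter (fun p : Fin n × Fin n => p.1 < p.2 ∧ π p.2 < π p.1)).card

/-- bivariate Eulerian polynomial over all of `S_n`; variable 0 is `s`, variable 1 is `t`. -/
noncomputable def Abiv (n : ℕ) : MvPolynomial (Fin 2) ℚ :=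
  ∑ π : Equiv.Perm (Fin n), MvPolynomial.X 1 ^ desA π * MvPolynomial.X 0 ^ ascA π

noncomputable def AbivP (n : ℕ) : MvPolynomial (Fin 2) ℚ :=
  ∑ π ∈ Finset.univ.filter (fun π : Equiv.Perm (Fin n) => Equiv.Perm.sign π = 1),
    MvPolynomial.X 1 ^ desA π * MvPolynomial.X 0 ^ ascA π

noncomputable def AbivM (n : ℕ) : MvPolynomial (Fin 2) ℚ :=
  ∑ π ∈ Finset.univ.filter (fun π : Equiv.Perm (Fin n) => Equiv.Perm.sign π = -1),
    MvPolynomial.X 1 ^ desA π * MvPolynomial.X 0 ^ ascA π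

noncomputable def Auni (n : ℕ) : Polynomial ℚ :=
  ∑ π : Equiv.Perm (Fin n), Polynomial.X ^ desA π

noncomputable def AuniP (n : ℕ) : Polynomial ℚ :=
  ∑ π ∈ Finset.univ.filter (fun π : Equiv.Perm (Fin n) => Equiv.Perm.sign π = 1),
    Polynomial.X ^ desA π

noncomputable def AuniM (n : ℕ) : Polynomial ℚ :=
  ∑ π ∈ Finset.univ.filter (fun π : Equiv.Perm (Fin n) => Equiv.Perm.sign π = -1),
    Polynomial.X ^ desA π

/-- the operator `∂/∂s + ∂/∂t`. -/
noncomputable def Dop (f : MvPolynomial (Fin 2) ℚ) : MvPolynomial (Fin 2) ℚ :=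
  MvPolynomial.pderiv 0 f + MvPolynomial.pderiv 1 f

/-- A univariate polynomial is palindromic: with `r` the least exponent with nonzero
coefficient and `n` the degree, `a_{r+i} = a_{n-i}`. -/
def Palind (f : Polynomial ℚ) : Prop :=
  ∀ i ≤ f.natDegree - f.natTrailingDegree,
    f.coeff (f.natTrailingDegree + i) = f.coeff (f.natDegree - i)

/-- bivariate gamma positivity with center of symmetry `N/2`. -/
def BivGamma (f : MvPolynomial (Fin 2) ℚ) (N : ℕ) : Prop :=
  ∃ γ : ℕ → ℕ, (∀ i, γ i ≠ 0 → 2*i ≤ N) ∧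
    f = ∑ i ∈ Finset.range (N+1), (γ i : MvPolynomial (Fin 2) ℚ) *
      ((MvPolynomial.X 0 * MvPolynomial.X 1)^i * (MvPolynomial.X 0 + MvPolynomial.X 1)^(N - 2*i))

/-- univariate gamma positivity with center of symmetry `c2/2`. -/
def UniGamma (f : Polynomial ℚ) (c2 : ℕ) : Prop :=
  ∃ γ : ℕ → ℕ, (∀ i, γ i ≠ 0 → 2*i ≤ c2) ∧
    f = ∑ i ∈ Finset.range (c2+1), (γ i : ℚ) •
      (Polynomial.X^i * (1 + Polynomial.X)^(c2 - 2*i))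

/-- signed permutations: a permutation together with a sign for each position. -/
abbrev SignedPerm (n : ℕ) := Equiv.Perm (Fin n) × (Fin n → Bool)

/-- the one-line word of a signed permutation, 1-indexed, with `bw w 0 = 0`;
entry `i` is `±(w.1 i + 1)` viewed in `{-n,…,-1,1,…,n}`. -/
def bw {n : ℕ} (w : SignedPerm n) (i : ℕ) : ℤ :=
  if h : 1 ≤ i ∧ i ≤ n then
    (if w.2 ⟨i-1, by omega⟩ then -(((w.1 ⟨i-1, by omega⟩ : ℕ) : ℤ) + 1)
     else ((w.1 ⟨i-1, by omega⟩ : ℕ) : ℤ) + 1)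
  else 0

/-- type-B descents (including a possible descent at position 0). -/
def desB {n : ℕ} (w : SignedPerm n) : ℕ :=
  ((Finset.range n).filter (fun i => bw w (i+1) < bw w i)).card

/-- type-B inversions (length). -/
def invB {n : ℕ} (w : SignedPerm n) : ℕ :=
  (Finset.univ.filter (fun p : Fin n × Fin n => p.1 < p.2 ∧ bw w (p.2.1+1) < bw w (p.1.1+1))).card
  + (Finset.univ.filter (fun p : Fin n × Fin n => p.1 < p.2 ∧ bw w (p.2.1+1) < -(bw w (p.1.1+1)))).card
  + (Finset.univ.filter (fun i : Fin n => bw w (i.1+1) < 0)).card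

/-- type-D inversions. -/
def invD {n : ℕ} (w : SignedPerm n) : ℕ :=
  (Finset.univ.filter (fun p : Fin n × Fin n => p.1 < p.2 ∧ bw w (p.2.1+1) < bw w (p.1.1+1))).card
  + (Finset.univ.filter (fun p : Fin n × Fin n => p.1 < p.2 ∧ bw w (p.2.1+1) < -(bw w (p.1.1+1)))).card

noncomputable def Bbiv (n : ℕ) : MvPolynomial (Fin 2) ℚ :=
  ∑ w : SignedPerm n, MvPolynomial.X 1 ^ desB w * MvPolynomial.X 0 ^ (n - desB w)

noncomputable def BbivP (n : ℕ) : MvPolynomial (Fin 2) ℚ :=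
  ∑ w ∈ Finset.univ.filter (fun w : SignedPerm n => Even (invB w)),
    MvPolynomial.X 1 ^ desB w * MvPolynomial.X 0 ^ (n - desB w)

noncomputable def BbivM (n : ℕ) : MvPolynomial (Fin 2) ℚ :=
  ∑ w ∈ Finset.univ.filter (fun w : SignedPerm n => ¬ Even (invB w)),
    MvPolynomial.X 1 ^ desB w * MvPolynomial.X 0 ^ (n - desB w)

noncomputable def BuniP (n : ℕ) : Polynomial ℚ :=
  ∑ w ∈ Finset.univ.filter (fun w : SignedPerm n => Even (invB w)), Polynomial.X ^ desB w

noncomputable def BuniM (n : ℕ) : Polynomial ℚ :=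
  ∑ w ∈ Finset.univ.filter (fun w : SignedPerm n => ¬ Even (invB w)), Polynomial.X ^ desB w

/-- deleting the largest letter from the one-line notation of `π ∈ S_{n+1}`
gives a permutation of `[n]`. -/
noncomputable def restrictMax {n : ℕ} (π : Equiv.Perm (Fin (n+1))) : Equiv.Perm (Fin n) :=
  Equiv.ofBijective
    (fun i => Fin.castPred (π ((π.symm (Fin.last n)).succAbove i))
      (by
        intro h
        have h2 : (π.symm (Fin.last n)).succAbove i = π.symm (Fin.last n) := by
          apply π.injective
          rw [h, Equiv.apply_symm_apply]
        exact Fin.succAbove_ne _ i h2))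
    (Finite.injective_iff_bijective.mp (by
      intro i j h
      have h2 : π ((π.symm (Fin.last n)).succAbove i) = π ((π.symm (Fin.last n)).succAbove j) :=
        Fin.castPred_inj.mp h
      have h3 := π.injective h2
      exact Fin.succAbove_right_injective h3))

/-- number of even permutations of `[n]` with `k` descents (`k : ℤ`). -/
noncomputable def aP (n : ℕ) (k : ℤ) : ℕ :=
  (Finset.univ.filter (fun π : Equiv.Perm (Fin n) =>
    Equiv.Perm.sign π = 1 ∧ (desA π : ℤ) = k)).card

/-- number of odd permutations of `[n]` with `k` descents. -/
noncomputable def aM (n : ℕ) (k : ℤ) : ℕ :=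
  (Finset.univ.filter (fun π : Equiv.Perm (Fin n) =>
    Equiv.Perm.sign π = -1 ∧ (desA π : ℤ) = k)).card

/-!
Inserting the letter `±(n+1)` at one of the `n + 1` positions of a signed permutation of `[n]`
is a bijection onto the signed permutations of `[n+1]`. Whatever its sign, the new letter keeps
the number of descents when it lands in a descent slot and adds one in an ascent slot; at the
end, the sign decides. Hence `B_{n+1} = (s+t) B_n + 2st (∂_s + ∂_t) B_n`, and this operator maps
`(st)^i (s+t)^{n-2i}` to a nonnegative combination of the next basis, so
`B_n = Σ γ_{n,i} (st)^i (s+t)^{n-2i}` with `γ_{n,0} = 1`, `γ_{n,i}` even for `i > 0` and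
`γ_{n,i} ≥ 4^i C(n/2, i)`. At an inner position the two signs change the length by `n + p + 1`
and `n - p`, of opposite parity, so `B_n^+ - B_n^- = (s - t)^n`.

For `n = 2m`, `(s - t)^n = ((s+t)^2 - 4st)^m` has gamma coefficients `(-4)^i C(m, i)`, so
`B_n^± = (B_n ± (s - t)^n) / 2` has the nonnegative integer gamma coefficients
`(γ_{n,i} ± (-4)^i C(m, i)) / 2`. For odd `n` put `s = 1`: the lowest and highest coefficients
are `1` (at `t^0`) and `≥ n` (at `t^{n-1}`) for `B_n^+`, and `≥ n` (at `t^1`) and `1` (at `t^n`)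
for `B_n^-`.
-/

def insertAfter (f : ℕ → ℤ) (q : ℕ) (x : ℤ) (j : ℕ) : ℤ :=
  if j ≤ q then f j else if j = q + 1 then x else f (j - 1)

def descentCount (f : ℕ → ℤ) (N : ℕ) : ℕ :=
  #{i ∈ range N | f (i + 1) < f i}

lemma descentCount_succ (f : ℕ → ℤ) (N : ℕ) :
    descentCount f (N + 1) = descentCount f N + if f (N + 1) < f N then 1 else 0 := by
  simp only [descentCount, card_filter, sum_range_succ]

lemma descentCount_congr {f g : ℕ → ℤ} {N : ℕ} (h : ∀ j ≤ N, f j = g j) :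
    descentCount f N = descentCount g N := by
  unfold descentCount
  congr 1
  refine filter_congr fun i hi => ?_
  rw [mem_range] at hi
  rw [h i (by omega), h (i + 1) (by omega)]

lemma descentCount_insertAfter (f : ℕ → ℤ) (q : ℕ) (x : ℤ) {N : ℕ} (hq : q ≤ N) :
    descentCount (insertAfter f q x) (N + 1) + (if q < N ∧ f (q + 1) < f q then 1 else 0) =
      descentCount f N + (if x < f q then 1 else 0) +
        (if q < N ∧ f (q + 1) < x then 1 else 0) := by
  induction N, hq using Nat.le_induction with
  | base =>
    have hlow : descentCount (insertAfter f q x) q = descentCount f q :=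
      descentCount_congr fun j hj => by simp [insertAfter, hj]
    simp [descentCount_succ, hlow, insertAfter]
  | succ N hqN ih =>
    rw [descentCount_succ _ (N + 1), descentCount_succ f N]
    have hnext : insertAfter f q x (N + 2) = f (N + 1) := by
      simp [insertAfter, show ¬ N + 2 ≤ q by omega, show N + 2 ≠ q + 1 by omega]
    have hcur : insertAfter f q x (N + 1) = if N = q then x else f N := by
      unfold insertAfter
      split_ifs <;> first | omega | rfl
    rw [hnext, hcur]
    rcases eq_or_ne N q with rfl | hNq
    · simp only [lt_irrefl, false_and, if_false, add_zero, if_true, lt_add_one, true_and] at ih ⊢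
      omega
    · simp only [hNq, if_false, show q < N by omega, show q < N + 1 by omega, true_and] at ih ⊢
      omega

lemma bw_zero {n : ℕ} (w : SignedPerm n) : bw w 0 = 0 := by simp [bw]

lemma bw_of_lt {n : ℕ} (w : SignedPerm n) {j : ℕ} (h : n < j) : bw w j = 0 := by
  simp [bw, show ¬ j ≤ n by omega]

lemma bw_fin_add_one {n : ℕ} (w : SignedPerm n) (k : Fin n) :
    bw w (k + 1) = if w.2 k then -((w.1 k : ℕ) + 1 : ℤ) else (w.1 k : ℕ) + 1 := by
  simp [bw]

lemma bw_le {n : ℕ} (w : SignedPerm n) (j : ℕ) : bw w j ≤ n := by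
  unfold bw
  split
  · have := (w.1 ⟨j - 1, by omega⟩).2
    split <;> omega
  · positivity

lemma neg_le_bw {n : ℕ} (w : SignedPerm n) (j : ℕ) : -(n : ℤ) ≤ bw w j := by
  unfold bw
  split
  · have := (w.1 ⟨j - 1, by omega⟩).2
    split <;> omega
  · simp

lemma desB_eq_descentCount {n : ℕ} (w : SignedPerm n) : desB w = descentCount (bw w) n := rfl

lemma desB_le {n : ℕ} (w : SignedPerm n) : desB w ≤ n :=
  (card_filter_le _ _).trans (card_range n).le

section Insertion

variable {n : ℕ}

def insertMax (w : SignedPerm n) (p : Fin (n + 1)) (ε : Bool) : SignedPerm (n + 1) :=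
  ((finSuccEquiv' p).trans ((Equiv.optionCongr w.1).trans (finSuccEquiv' (Fin.last n)).symm),
   fun j => ((finSuccEquiv' p) j).elim ε w.2)

variable (w : SignedPerm n) (p : Fin (n + 1)) (ε : Bool)

@[simp] lemma insertMax_perm_self : (insertMax w p ε).1 p = Fin.last n := by
  simp [insertMax, finSuccEquiv'_at]

@[simp] lemma insertMax_perm_succAbove (i : Fin n) :
    (insertMax w p ε).1 (p.succAbove i) = (w.1 i).castSucc := by
  simp only [insertMax, Equiv.trans_apply, finSuccEquiv'_succAbove, Equiv.optionCongr_apply,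
    Option.map_some]
  exact finSuccEquiv'_symm_some_below (Fin.castSucc_lt_last _)

@[simp] lemma insertMax_sign_self : (insertMax w p ε).2 p = ε := by
  simp [insertMax, finSuccEquiv'_at]

@[simp] lemma insertMax_sign_succAbove (i : Fin n) :
    (insertMax w p ε).2 (p.succAbove i) = w.2 i := by
  simp [insertMax, finSuccEquiv'_succAbove]

def topLetter (n : ℕ) (ε : Bool) : ℤ := if ε then -(n + 1) else n + 1

lemma bw_insertMax_self : bw (insertMax w p ε) (p + 1) = topLetter n ε := by
  rw [bw_fin_add_one, insertMax_perm_self, insertMax_sign_self, topLetter, Fin.val_last]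

lemma bw_insertMax_succAbove (i : Fin n) :
    bw (insertMax w p ε) (p.succAbove i + 1) = bw w (i + 1) := by
  rw [bw_fin_add_one, bw_fin_add_one, insertMax_perm_succAbove, insertMax_sign_succAbove,
    Fin.val_castSucc]

lemma bw_insertMax : bw (insertMax w p ε) = insertAfter (bw w) p (topLetter n ε) := by
  funext j
  rcases Nat.lt_or_ge (n + 1) j with hj | hj
  · rw [bw_of_lt _ hj, insertAfter, if_neg (by omega), if_neg (by omega),
      bw_of_lt _ (by omega)]
  rcases Nat.eq_zero_or_pos j with rfl | hj0
  · simp [bw_zero, insertAfter]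
  obtain ⟨k, rfl⟩ : ∃ k : Fin (n + 1), j = k + 1 :=
    ⟨⟨j - 1, by omega⟩, by dsimp only; omega⟩
  rcases eq_or_ne k p with rfl | hkp
  · simp [bw_insertMax_self, insertAfter]
  obtain ⟨i, rfl⟩ := Fin.exists_succAbove_eq hkp
  rw [bw_insertMax_succAbove]
  rcases Fin.castSucc_lt_or_lt_succ p i with hi | hi
  · rw [Fin.succAbove_of_castSucc_lt _ _ hi]
    rw [Fin.lt_def, Fin.val_castSucc] at hi
    simp [insertAfter, show (i : ℕ) + 1 ≤ p by omega]
  · rw [Fin.succAbove_of_lt_succ _ _ hi]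
    rw [Fin.lt_def, Fin.val_succ] at hi
    simp [insertAfter, show ¬ (i : ℕ) + 1 + 1 ≤ p by omega, show (i : ℕ) + 1 ≠ p by omega]

lemma restrictMax_apply (π : Equiv.Perm (Fin (n + 1))) (i : Fin n) :
    (restrictMax π i).castSucc = π ((π.symm (Fin.last n)).succAbove i) := by
  simp [restrictMax]

noncomputable def insertMaxEquiv (n : ℕ) :
    SignedPerm n × Fin (n + 1) × Bool ≃ SignedPerm (n + 1) where
  toFun x := insertMax x.1 x.2.1 x.2.2
  invFun W :=
    ((restrictMax W.1, fun i => W.2 ((W.1.symm (Fin.last n)).succAbove i)),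
      W.1.symm (Fin.last n), W.2 (W.1.symm (Fin.last n)))
  left_inv := by
    rintro ⟨w, p, ε⟩
    have hp : (insertMax w p ε).1.symm (Fin.last n) = p := by
      rw [Equiv.symm_apply_eq, insertMax_perm_self]
    refine Prod.ext (Prod.ext ?_ ?_) (Prod.ext ?_ ?_)
    · ext i
      rw [← Fin.val_castSucc, restrictMax_apply, hp, insertMax_perm_succAbove, Fin.val_castSucc]
    · funext i
      simp only [hp, insertMax_sign_succAbove]
    · exact hp
    · simp only [hp, insertMax_sign_self]
  right_inv := by
    rintro ⟨π, s⟩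
    set p := π.symm (Fin.last n)
    have hπp : π p = Fin.last n := π.apply_symm_apply _
    refine Prod.ext (Equiv.ext fun j => ?_) (funext fun j => ?_) <;>
    rcases eq_or_ne j p with rfl | hj
    · rw [insertMax_perm_self, hπp]
    · obtain ⟨i, rfl⟩ := Fin.exists_succAbove_eq hj
      rw [insertMax_perm_succAbove, restrictMax_apply]
    · rw [insertMax_sign_self]
    · obtain ⟨i, rfl⟩ := Fin.exists_succAbove_eq hj
      rw [insertMax_sign_succAbove]

variable (w : SignedPerm n) (ε : Bool)

lemma desB_insertMax_castSucc (i : Fin n) :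
    desB (insertMax w i.castSucc ε) =
      if bw w (i + 1) < bw w i then desB w else desB w + 1 := by
  have h := descentCount_insertAfter (bw w) i (topLetter n ε) (N := n) (by omega)
  rw [desB_eq_descentCount, bw_insertMax, desB_eq_descentCount, Fin.val_castSucc]
  have := bw_le w i; have := bw_le w (i + 1)
  have := neg_le_bw w i; have := neg_le_bw w (i + 1)
  cases ε <;> simp only [topLetter, if_true, Bool.false_eq_true, if_false] at h ⊢ <;>
    split_ifs at h ⊢ <;> omega

lemma desB_insertMax_last :
    desB (insertMax w (Fin.last n) ε) = if ε then desB w + 1 else desB w := by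
  have h := descentCount_insertAfter (bw w) n (topLetter n ε) (N := n) le_rfl
  rw [desB_eq_descentCount, bw_insertMax, desB_eq_descentCount, Fin.val_last]
  have := bw_le w n; have := neg_le_bw w n
  cases ε <;> simp only [topLetter, if_true, Bool.false_eq_true, if_false] at h ⊢ <;>
    split_ifs at h ⊢ <;> omega

end Insertion

section Inversions

variable {n : ℕ}

lemma card_filter_fin_succAbove (P : Fin (n + 1) → Prop) [DecidablePred P] (p : Fin (n + 1)) :
    #{i | P i} = (if P p then 1 else 0) + #{i : Fin n | P (p.succAbove i)} := by
  simp only [card_filter, Fin.sum_univ_succAbove _ p]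

lemma card_filter_fin_prod_succAbove (P : Fin (n + 1) × Fin (n + 1) → Prop) [DecidablePred P]
    (p : Fin (n + 1)) :
    #{x | P x} = (if P (p, p) then 1 else 0) + #{j : Fin n | P (p, p.succAbove j)} +
      #{i : Fin n | P (p.succAbove i, p)} +
        #{x : Fin n × Fin n | P (p.succAbove x.1, p.succAbove x.2)} := by
  simp only [card_filter, Fintype.sum_prod_type, Fin.sum_univ_succAbove _ p, sum_add_distrib]
  abel

lemma card_succAbove_lt (p : Fin (n + 1)) : #{i : Fin n | p.succAbove i < p} = p := by
  simp_rw [Fin.succAbove_lt_iff_castSucc_lt, Fin.lt_def, Fin.val_castSucc]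
  rw [Fin.card_filter_val_lt]
  omega

lemma card_lt_succAbove (p : Fin (n + 1)) : #{i : Fin n | p < p.succAbove i} = n - p := by
  have h := card_filter_add_card_filter_not (s := univ) fun i : Fin n => p.succAbove i < p
  have hne : ∀ i : Fin n, ¬ p.succAbove i < p ↔ p < p.succAbove i := fun i =>
    not_lt.trans (le_iff_lt_or_eq.trans (or_iff_left (Fin.succAbove_ne p i).symm))
  simp only [hne, card_succAbove_lt, card_univ, Fintype.card_fin] at h
  omega

lemma invB_insertMax (w : SignedPerm n) (p : Fin (n + 1)) (ε : Bool) :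
    invB (insertMax w p ε) = invB w + if ε then n + p + 1 else n - p := by
  have h1 : ∀ j, bw w j < n + 1 := fun j => by linarith [bw_le w j]
  have h2 : ∀ j, -(n + 1 : ℤ) < bw w j := fun j => by linarith [neg_le_bw w j]
  have h3 : ∀ j, -(n + 1 : ℤ) < -bw w j := fun j => by linarith [bw_le w j]
  have h4 : ∀ j, -bw w j < n + 1 := fun j => by linarith [neg_le_bw w j]
  unfold invB
  rw [card_filter_fin_prod_succAbove _ p, card_filter_fin_prod_succAbove _ p,
    card_filter_fin_succAbove _ p]
  simp only [bw_insertMax_self, bw_insertMax_succAbove, Fin.succAbove_lt_succAbove_iff,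
    lt_irrefl, false_and, if_false, zero_add]
  have hp := p.isLt
  have h5 : ¬ ((n : ℤ) + 1 < 0) := by omega
  have h6 : -((n : ℤ) + 1) < 0 := by omega
  cases ε <;> simp only [topLetter, Bool.false_eq_true, if_true, if_false, neg_neg, h1, h2, h3,
    (h1 _).not_gt, (h2 _).not_gt, (h4 _).not_gt, h5, h6, and_true, and_false, filter_false,
    card_empty, card_succAbove_lt, card_lt_succAbove] <;> omega

end Inversions

section FibreSums

variable {n : ℕ} {M : Type*}

lemma desB_eq_card_fin (w : SignedPerm n) : desB w = #{i : Fin n | bw w (i + 1) < bw w i} := by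
  rw [desB, card_filter, card_filter,
    Fin.sum_univ_eq_sum_range (fun i => if bw w (i + 1) < bw w i then 1 else 0)]

lemma sum_insertMax_desB [AddCommMonoid M] (F : ℕ → M) (w : SignedPerm n) :
    ∑ p, ∑ ε, F (desB (insertMax w p ε)) =
      (2 * desB w + 1) • F (desB w) + (2 * (n - desB w) + 1) • F (desB w + 1) := by
  have hasc : #{i : Fin n | ¬ bw w (i + 1) < bw w i} = n - desB w := by
    have h := card_filter_add_card_filter_not (s := univ) fun i : Fin n => bw w (i + 1) < bw w i
    rw [card_univ, Fintype.card_fin] at h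
    rw [desB_eq_card_fin]
    omega
  simp only [Fin.sum_univ_castSucc, Fintype.sum_bool, desB_insertMax_castSucc, desB_insertMax_last,
    if_true, Bool.false_eq_true, if_false, apply_ite F, sum_add_distrib, sum_ite, sum_const,
    ← desB_eq_card_fin, hasc]
  simp only [add_nsmul, mul_nsmul', one_nsmul]
  abel

lemma sum_insertMax_neg_one_pow_invB_smul [AddCommGroup M] (F : ℕ → M) (w : SignedPerm n) :
    ∑ p, ∑ ε, (-1 : ℤ) ^ invB (insertMax w p ε) • F (desB (insertMax w p ε)) =
      (-1 : ℤ) ^ invB w • (F (desB w) - F (desB w + 1)) := by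
  have hodd : ∀ a k : ℕ, (-1 : ℤ) ^ (a + (2 * k + 1)) = -(-1) ^ a := fun a k => by
    rw [pow_add, (odd_two_mul_add_one k).neg_one_pow, mul_neg_one]
  have hcancel : ∀ i : Fin n,
      (-1 : ℤ) ^ (invB w + (n + i + 1)) + (-1) ^ (invB w + (n - i)) = 0 := fun i => by
      rw [show invB w + (n + i + 1) = invB w + (n - i) + (2 * i + 1) by omega, hodd, neg_add_cancel]
  simp only [Fin.sum_univ_castSucc, Fintype.sum_bool, desB_insertMax_castSucc, desB_insertMax_last,
    invB_insertMax, if_true, Bool.false_eq_true, if_false, Fin.val_castSucc, Fin.val_last,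
    ← add_smul, hcancel, zero_smul, sum_const_zero, zero_add, Nat.sub_self, add_zero]
  rw [show n + n + 1 = 2 * n + 1 by omega, hodd, neg_smul, smul_sub]
  abel

end FibreSums

lemma nsmul_pow_sub_one_mul {R : Type*} [Semiring R] (a : R) (k : ℕ) :
    (k • a ^ (k - 1)) * a = k • a ^ k := by
  rcases eq_or_ne k 0 with rfl | hk
  · simp
  · rw [smul_mul_assoc, pow_sub_one_mul hk]

section Polynomials

open MvPolynomial

local notation "𝒫" => MvPolynomial (Fin 2) ℚ

noncomputable def eulerianOp : 𝒫 →ₗ[ℚ] 𝒫 :=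
  LinearMap.mulLeft ℚ (X 0 + X 1) +
    LinearMap.mulLeft ℚ (2 * (X 0 * X 1)) ∘ₗ
      (pderiv 0 + pderiv 1 : Derivation ℚ 𝒫 𝒫).toLinearMap

lemma eulerianOp_apply (f : 𝒫) : eulerianOp f = (X 0 + X 1) * f + 2 * (X 0 * X 1) * Dop f := rfl

lemma Dop_add (f g : 𝒫) : Dop (f + g) = Dop f + Dop g :=
  map_add (pderiv 0 + pderiv 1 : Derivation ℚ 𝒫 𝒫) f g

lemma Dop_mul (f g : 𝒫) : Dop (f * g) = f * Dop g + g * Dop f :=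
  (pderiv 0 + pderiv 1 : Derivation ℚ 𝒫 𝒫).leibniz f g

lemma Dop_pow (f : 𝒫) (k : ℕ) : Dop (f ^ k) = (k • f ^ (k - 1)) * Dop f := by
  rw [Dop, ← Derivation.add_apply, Derivation.leibniz_pow, smul_eq_mul, smul_mul_assoc]
  rfl

lemma Dop_X (j : Fin 2) : Dop (X j) = 1 := by
  fin_cases j <;> simp [Dop, pderiv_X]

noncomputable def descentMonomial (n d : ℕ) : 𝒫 := X 1 ^ d * X 0 ^ (n - d)

lemma eulerianOp_descentMonomial {n d : ℕ} (hd : d ≤ n) :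
    eulerianOp (descentMonomial n d) =
      (2 * d + 1) • descentMonomial (n + 1) d +
        (2 * (n - d) + 1) • descentMonomial (n + 1) (d + 1) := by
  have h0 := nsmul_pow_sub_one_mul (X 0 : 𝒫) (n - d)
  have h1 := nsmul_pow_sub_one_mul (X 1 : 𝒫) d
  simp only [nsmul_eq_mul] at h0 h1 ⊢
  rw [eulerianOp_apply, descentMonomial, descentMonomial, descentMonomial, Dop_mul, Dop_pow,
    Dop_pow, Dop_X, Dop_X, show n + 1 - d = n - d + 1 by omega, Nat.add_sub_add_right]
  push_cast
  linear_combination (2 * X 1 ^ (d + 1) : 𝒫) * h0 + 2 * X 0 ^ (n - d + 1) * h1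

lemma Bbiv_eq_sum_descentMonomial (n : ℕ) :
    Bbiv n = ∑ w : SignedPerm n, descentMonomial n (desB w) := rfl

lemma Bbiv_zero : Bbiv 0 = 1 := by
  simp [Bbiv_eq_sum_descentMonomial, descentMonomial, desB]

lemma Bbiv_succ (n : ℕ) : Bbiv (n + 1) = eulerianOp (Bbiv n) := by
  rw [Bbiv_eq_sum_descentMonomial, Bbiv_eq_sum_descentMonomial, map_sum,
    ← (insertMaxEquiv n).sum_comp, Fintype.sum_prod_type]
  refine sum_congr rfl fun w _ => ?_
  rw [Fintype.sum_prod_type, eulerianOp_descentMonomial (desB_le w)]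
  exact sum_insertMax_desB (descentMonomial (n + 1)) w

lemma descentMonomial_succ_sub {n d : ℕ} (hd : d ≤ n) :
    descentMonomial (n + 1) d - descentMonomial (n + 1) (d + 1) =
      (X 0 - X 1) * descentMonomial n d := by
  rw [descentMonomial, descentMonomial, descentMonomial, show n + 1 - d = n - d + 1 by omega,
    Nat.add_sub_add_right]
  ring

lemma sum_neg_one_pow_invB_smul_descentMonomial (n : ℕ) :
    ∑ w : SignedPerm n, (-1 : ℤ) ^ invB w • descentMonomial n (desB w) = (X 0 - X 1) ^ n := by
  induction n with
  | zero => simp [descentMonomial, desB, invB]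
  | succ n ih =>
    rw [← (insertMaxEquiv n).sum_comp, Fintype.sum_prod_type, pow_succ', ← ih, mul_sum]
    refine sum_congr rfl fun w _ => ?_
    rw [Fintype.sum_prod_type, mul_smul_comm, ← descentMonomial_succ_sub (desB_le w)]
    exact sum_insertMax_neg_one_pow_invB_smul (descentMonomial (n + 1)) w

lemma BbivP_add_BbivM (n : ℕ) : BbivP n + BbivM n = Bbiv n :=
  sum_filter_add_sum_filter_not _ _ _

lemma BbivP_sub_BbivM (n : ℕ) : BbivP n - BbivM n = (X 0 - X 1) ^ n := by
  rw [← sum_neg_one_pow_invB_smul_descentMonomial, ← sum_filter_add_sum_filter_not _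
    fun w => Even (invB w), BbivP, BbivM, sub_eq_add_neg, ← sum_neg_distrib]
  congr 1 <;> refine sum_congr rfl fun w hw => ?_ <;> rw [mem_filter] at hw
  · rw [hw.2.neg_one_pow, one_smul]; rfl
  · rw [(Nat.not_even_iff_odd.mp hw.2).neg_one_pow, neg_one_zsmul]; rfl

noncomputable def gammaBasis (N i : ℕ) : 𝒫 := (X 0 * X 1) ^ i * (X 0 + X 1) ^ (N - 2 * i)

lemma eulerianOp_gammaBasis {n i : ℕ} (hi : 2 * i ≤ n) :
    eulerianOp (gammaBasis n i) =
      (2 * i + 1) • gammaBasis (n + 1) i + (4 * (n - 2 * i)) • gammaBasis (n + 1) (i + 1) := by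
  have hu := nsmul_pow_sub_one_mul (X 0 * X 1 : 𝒫) i
  simp only [nsmul_eq_mul] at hu ⊢
  rw [eulerianOp_apply, gammaBasis, gammaBasis, gammaBasis, Dop_mul, Dop_pow, Dop_pow, Dop_mul,
    Dop_add, Dop_X, Dop_X, show n + 1 - 2 * i = n - 2 * i + 1 by omega,
    show n + 1 - 2 * (i + 1) = n - 2 * i - 1 by omega]
  push_cast
  linear_combination (2 * (X 0 + X 1) ^ (n - 2 * i + 1) : 𝒫) * hu

/-- The recurrence is the action of `eulerianOp` on `gammaBasis` (`eulerianOp_gammaBasis`). -/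
def typeBGamma : ℕ → ℕ → ℕ
  | 0, 0 => 1
  | 0, _ + 1 => 0
  | n + 1, 0 => typeBGamma n 0
  | n + 1, i + 1 => (2 * (i + 1) + 1) * typeBGamma n (i + 1) + 4 * (n - 2 * i) * typeBGamma n i

lemma typeBGamma_zero_right (n : ℕ) : typeBGamma n 0 = 1 := by
  induction n with
  | zero => rfl
  | succ n ih => rwa [typeBGamma]

lemma typeBGamma_eq_zero {n i : ℕ} (h : n < 2 * i) : typeBGamma n i = 0 := by
  induction n generalizing i with
  | zero => obtain ⟨i, rfl⟩ := Nat.exists_eq_succ_of_ne_zero (by omega : i ≠ 0); rfl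
  | succ n ih =>
    obtain ⟨i, rfl⟩ := Nat.exists_eq_succ_of_ne_zero (by omega : i ≠ 0)
    rw [typeBGamma, ih (by omega)]
    rcases Nat.lt_or_ge n (2 * i) with h' | h'
    · simp [ih h']
    · simp [show n - 2 * i = 0 by omega]

lemma even_typeBGamma {n i : ℕ} (hi : i ≠ 0) : Even (typeBGamma n i) := by
  obtain ⟨i, rfl⟩ := Nat.exists_eq_succ_of_ne_zero hi
  induction n with
  | zero => exact ⟨0, rfl⟩
  | succ n ih =>
    rw [typeBGamma]
    exact (ih.mul_left _).add ((even_two_mul 2).mul_right _ |>.mul_right _)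

lemma four_pow_mul_choose_le_typeBGamma (n i : ℕ) :
    4 ^ i * (n / 2).choose i ≤ typeBGamma n i := by
  induction n generalizing i with
  | zero => cases i <;> simp [typeBGamma]
  | succ n ih =>
    cases i with
    | zero => simp [typeBGamma_zero_right]
    | succ j =>
      have hj1 := ih (j + 1)
      rw [typeBGamma]
      rcases Nat.even_or_odd n with ⟨m, rfl⟩ | ⟨m, rfl⟩
      · rw [show (m + m + 1) / 2 = (m + m) / 2 by omega]
        nlinarith
      · rw [show (2 * m + 1 + 1) / 2 = (2 * m + 1) / 2 + 1 by omega, Nat.choose_succ_succ',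
          mul_add]
        have hj0 : 4 ^ (j + 1) * ((2 * m + 1) / 2).choose j ≤ 4 * (2 * m + 1 - 2 * j) *
            typeBGamma (2 * m + 1) j := by
          rcases le_or_gt j m with hjm | hjm
          · have := ih j
            have : 1 ≤ 2 * m + 1 - 2 * j := by omega
            rw [pow_succ]
            nlinarith
          · simp [Nat.choose_eq_zero_of_lt (show (2 * m + 1) / 2 < j by omega)]
        nlinarith

lemma typeBGamma_add_nonneg (n i : ℕ) {σ : ℤ} (hσ : σ = 1 ∨ σ = -1) :
    0 ≤ (typeBGamma n i : ℤ) + σ * ((-4) ^ i * (n / 2).choose i) := by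
  have h : ((4 ^ i * (n / 2).choose i : ℕ) : ℤ) ≤ typeBGamma n i :=
    Int.ofNat_le.mpr (four_pow_mul_choose_le_typeBGamma n i)
  push_cast at h
  have hc : (0 : ℤ) ≤ 4 ^ i * (n / 2).choose i := by positivity
  rcases Nat.even_or_odd i with hi | hi <;>
    [rw [hi.neg_pow]; rw [hi.neg_pow]] <;> rcases hσ with rfl | rfl <;> linarith

lemma even_typeBGamma_add (n i : ℕ) {σ : ℤ} (hσ : σ = 1 ∨ σ = -1) :
    Even ((typeBGamma n i : ℤ) + σ * ((-4) ^ i * (n / 2).choose i)) := by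
  rcases eq_or_ne i 0 with rfl | hi
  · rcases hσ with rfl | rfl <;> simp [typeBGamma_zero_right]
  · obtain ⟨j, rfl⟩ := Nat.exists_eq_succ_of_ne_zero hi
    refine ((Int.even_coe_nat _).mpr (even_typeBGamma hi)).add (Even.mul_left ?_ σ)
    exact (Int.even_pow.mpr ⟨⟨-2, by norm_num⟩, hi⟩).mul_right _

lemma sum_typeBGamma_smul_eulerianOp (n : ℕ) :
    ∑ i ∈ range (n + 1), typeBGamma n i • eulerianOp (gammaBasis n i) =
      ∑ i ∈ range (n + 2), typeBGamma (n + 1) i • gammaBasis (n + 1) i := by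
  have hterm : ∀ i ∈ range (n + 1), typeBGamma n i • eulerianOp (gammaBasis n i) =
      ((2 * i + 1) * typeBGamma n i) • gammaBasis (n + 1) i +
        (4 * (n - 2 * i) * typeBGamma n i) • gammaBasis (n + 1) (i + 1) := fun i _ => by
    rcases Nat.lt_or_ge n (2 * i) with h | h
    · simp [typeBGamma_eq_zero h]
    · rw [eulerianOp_gammaBasis h, smul_add, smul_smul, smul_smul, mul_comm (typeBGamma n i),
        mul_comm (typeBGamma n i)]
  have hshift : ∑ i ∈ range (n + 1), ((2 * i + 1) * typeBGamma n i) • gammaBasis (n + 1) i =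
      ∑ i ∈ range (n + 1),
          ((2 * (i + 1) + 1) * typeBGamma n (i + 1)) • gammaBasis (n + 1) (i + 1) +
        typeBGamma n 0 • gammaBasis (n + 1) 0 := by
    have h := sum_range_succ' (fun i => ((2 * i + 1) * typeBGamma n i) • gammaBasis (n + 1) i)
      (n + 1)
    rw [sum_range_succ, typeBGamma_eq_zero (show n < 2 * (n + 1) by omega), mul_zero, zero_smul,
      add_zero] at h
    simpa using h
  rw [sum_congr rfl hterm, sum_add_distrib, hshift, sum_range_succ' _ (n + 1)]
  simp only [typeBGamma, add_smul, sum_add_distrib]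
  abel

lemma Bbiv_eq_sum_gammaBasis (n : ℕ) :
    Bbiv n = ∑ i ∈ range (n + 1), typeBGamma n i • gammaBasis n i := by
  induction n with
  | zero => simp [Bbiv_zero, typeBGamma, gammaBasis]
  | succ n ih =>
    rw [Bbiv_succ, ih, map_sum, ← sum_typeBGamma_smul_eulerianOp]
    simp only [map_nsmul]

lemma sub_pow_two_mul_eq_sum_gammaBasis (m : ℕ) :
    (X 0 - X 1 : 𝒫) ^ (2 * m) =
      ∑ i ∈ range (2 * m + 1), ((-4 : ℤ) ^ i * m.choose i) • gammaBasis (2 * m) i := by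
  have hsq : (X 0 - X 1 : 𝒫) ^ 2 = (-4) * (X 0 * X 1) + (X 0 + X 1) ^ 2 := by ring
  rw [pow_mul, hsq, add_pow,
    ← sum_subset (range_subset_range.mpr (by omega : m + 1 ≤ 2 * m + 1))]
  · refine sum_congr rfl fun i hi => ?_
    rw [gammaBasis, ← pow_mul, show 2 * (m - i) = 2 * m - 2 * i by omega]
    simp only [zsmul_eq_mul]
    push_cast
    ring
  · intro i _ hi
    rw [Nat.choose_eq_zero_of_lt (by simp at hi; omega)]
    simp

lemma bivGamma_of_two_smul_eq {f : 𝒫} {N : ℕ} (a : ℕ → ℤ) (ha : ∀ i, 0 ≤ a i)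
    (heven : ∀ i, Even (a i)) (hsupp : ∀ i, N < 2 * i → a i = 0)
    (h : (2 : ℤ) • f = ∑ i ∈ range (N + 1), a i • gammaBasis N i) : BivGamma f N := by
  refine ⟨fun i => (a i / 2).toNat, fun i hi => ?_, ?_⟩
  · by_contra hlt
    exact hi (by simp [hsupp i (by omega)])
  · have hhalf : ∀ i, a i = 2 * ((a i / 2).toNat : ℤ) := fun i => by
      rw [Int.toNat_of_nonneg (Int.ediv_nonneg (ha i) zero_le_two),
        Int.mul_ediv_cancel' (heven i).two_dvd]
    apply smul_right_injective 𝒫 (two_ne_zero (α := ℤ))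
    simp only [h, smul_sum]
    refine sum_congr rfl fun i _ => ?_
    rw [show a i • gammaBasis N i = (2 * ((a i / 2).toNat : ℤ)) • gammaBasis N i by
      rw [← hhalf i], mul_smul, natCast_zsmul, nsmul_eq_mul]
    rfl

lemma bivGamma_of_two_smul_eq_Bbiv_add (m : ℕ) {σ : ℤ} (hσ : σ = 1 ∨ σ = -1) {f : 𝒫}
    (hf : (2 : ℤ) • f = Bbiv (2 * m) + σ • (X 0 - X 1) ^ (2 * m)) : BivGamma f (2 * m) := by
  have hm : 2 * m / 2 = m := by omega
  refine bivGamma_of_two_smul_eq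
    (fun i => typeBGamma (2 * m) i + σ * ((-4) ^ i * m.choose i))
    (fun i => by simpa only [hm] using typeBGamma_add_nonneg (2 * m) i hσ)
    (fun i => by simpa only [hm] using even_typeBGamma_add (2 * m) i hσ)
    (fun i hi => ?_) ?_
  · simp [typeBGamma_eq_zero hi, Nat.choose_eq_zero_of_lt (show m < i by omega)]
  · rw [hf, Bbiv_eq_sum_gammaBasis, sub_pow_two_mul_eq_sum_gammaBasis, smul_sum,
      ← sum_add_distrib]
    refine sum_congr rfl fun i _ => ?_
    rw [add_smul, smul_smul, natCast_zsmul]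

lemma bivGamma_BbivP_BbivM_of_even {n : ℕ} (hn : Even n) :
    BivGamma (BbivP n) n ∧ BivGamma (BbivM n) n := by
  obtain ⟨m, rfl⟩ := hn
  rw [← two_mul]
  have hadd := BbivP_add_BbivM (2 * m)
  have hsub := BbivP_sub_BbivM (2 * m)
  constructor
  · refine bivGamma_of_two_smul_eq_Bbiv_add m (Or.inl rfl) ?_
    rw [← hadd, ← hsub, one_smul, two_zsmul]
    abel
  · refine bivGamma_of_two_smul_eq_Bbiv_add m (Or.inr rfl) ?_
    rw [← hadd, ← hsub, neg_one_zsmul, two_zsmul]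
    abel

lemma aeval_descentMonomial (n d : ℕ) :
    aeval ![1, Polynomial.X] (descentMonomial n d) = (Polynomial.X : Polynomial ℚ) ^ d := by
  simp [descentMonomial]

lemma aeval_gammaBasis (n i : ℕ) :
    aeval ![1, Polynomial.X] (gammaBasis n i) =
      (Polynomial.X : Polynomial ℚ) ^ i * (1 + Polynomial.X) ^ (n - 2 * i) := by
  simp [gammaBasis]

lemma aeval_BbivP (n : ℕ) : aeval ![1, Polynomial.X] (BbivP n) = BuniP n := by
  simp only [BbivP, BuniP, map_sum]
  exact sum_congr rfl fun w _ => aeval_descentMonomial n (desB w)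

lemma aeval_BbivM (n : ℕ) : aeval ![1, Polynomial.X] (BbivM n) = BuniM n := by
  simp only [BbivM, BuniM, map_sum]
  exact sum_congr rfl fun w _ => aeval_descentMonomial n (desB w)

end Polynomials

section Univariate

open Polynomial

lemma coeff_one_sub_X_pow (n k : ℕ) :
    ((1 - X : ℚ[X]) ^ n).coeff k = (-1) ^ k * n.choose k := by
  rcases le_or_gt k n with hk | hk
  · rw [show (1 - X : ℚ[X]) = C (-1) * (X + C (-1)) by simp; ring, mul_pow, ← C_pow,
      coeff_C_mul, coeff_X_add_C_pow, ← mul_assoc, ← pow_add,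
      show n + (n - k) = k + 2 * (n - k) by omega, pow_add, pow_mul]
    simp
  · rw [Nat.choose_eq_zero_of_lt hk, coeff_eq_zero_of_natDegree_lt]
    · simp
    · exact (natDegree_pow_le_of_le n
        (natDegree_sub_le_of_le natDegree_one.le natDegree_X_le)).trans_lt (by simpa using hk)

noncomputable def gammaExpansion (γ : ℕ → ℕ) (n : ℕ) : ℚ[X] :=
  ∑ i ∈ range (n + 1), γ i • (X ^ i * (1 + X) ^ (n - 2 * i))

lemma BuniP_add_BuniM (n : ℕ) : BuniP n + BuniM n = gammaExpansion (typeBGamma n) n := by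
  rw [← aeval_BbivP, ← aeval_BbivM, ← map_add, BbivP_add_BbivM, Bbiv_eq_sum_gammaBasis,
    map_sum]
  simp only [map_nsmul, aeval_gammaBasis, gammaExpansion]

lemma BuniP_sub_BuniM (n : ℕ) : BuniP n - BuniM n = (1 - X) ^ n := by
  rw [← aeval_BbivP, ← aeval_BbivM, ← map_sub, BbivP_sub_BbivM]
  simp

section Coefficients

variable (γ : ℕ → ℕ) (n : ℕ)

lemma coeff_gammaExpansion (k : ℕ) :
    (gammaExpansion γ n).coeff k =
      ∑ i ∈ range (n + 1),
        if i ≤ k then (γ i * (n - 2 * i).choose (k - i) : ℚ) else 0 := by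
  simp only [gammaExpansion, finsetSum_coeff, coeff_smul, coeff_X_pow_mul', coeff_one_add_X_pow]
  refine sum_congr rfl fun i _ => ?_
  split_ifs <;> simp

lemma coeff_gammaExpansion_zero : (gammaExpansion γ n).coeff 0 = γ 0 := by
  rw [coeff_gammaExpansion, sum_eq_single 0 (fun i _ hi => by simp [hi]) (by simp)]
  simp

lemma coeff_gammaExpansion_self (hγ : ∀ i, n < 2 * i → γ i = 0) :
    (gammaExpansion γ n).coeff n = γ 0 := by
  rw [coeff_gammaExpansion, sum_eq_single 0 (fun i _ hi => ?_) (by simp)]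
  · simp
  · rcases Nat.lt_or_ge n (2 * i) with hn | hn
    · simp [hγ i hn]
    · rw [Nat.choose_eq_zero_of_lt (show n - 2 * i < n - i by omega)]
      simp

lemma coeff_gammaExpansion_of_lt (hγ : ∀ i, n < 2 * i → γ i = 0) {k : ℕ} (hk : n < k) :
    (gammaExpansion γ n).coeff k = 0 := by
  rw [coeff_gammaExpansion]
  refine sum_eq_zero fun i _ => ?_
  rcases Nat.lt_or_ge n (2 * i) with hn | hn
  · simp [hγ i hn]
  · rw [Nat.choose_eq_zero_of_lt (show n - 2 * i < k - i by omega)]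
    simp

lemma mul_choose_le_coeff_gammaExpansion (k : ℕ) :
    (γ 0 * n.choose k : ℚ) ≤ (gammaExpansion γ n).coeff k := by
  rw [coeff_gammaExpansion]
  refine le_trans (le_of_eq (by simp)) (single_le_sum (fun i _ => ?_) (mem_range.mpr n.succ_pos))
  split_ifs <;> positivity

end Coefficients

lemma not_palind_of_coeff {f : ℚ[X]} {r d : ℕ} (hr : f.coeff r ≠ 0)
    (hlow : ∀ k < r, f.coeff k = 0) (hd : f.coeff d ≠ 0)
    (hhigh : ∀ k, d < k → f.coeff k = 0) (hne : f.coeff r ≠ f.coeff d) : ¬ Palind f := by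
  have hf : f ≠ 0 := fun h => hr (by simp [h])
  have htrail : f.natTrailingDegree = r :=
    (natTrailingDegree_le_of_ne_zero hr).antisymm (le_natTrailingDegree hf hlow)
  have hdeg : f.natDegree = d :=
    natDegree_eq_of_le_of_coeff_ne_zero (natDegree_le_iff_coeff_eq_zero.mpr hhigh) hd
  exact fun h => hne (by simpa [htrail, hdeg] using h 0 (Nat.zero_le _))

lemma two_mul_coeff_BuniP (n k : ℕ) : 2 * (BuniP n).coeff k =
    (gammaExpansion (typeBGamma n) n).coeff k + (-1) ^ k * n.choose k := by
  rw [← coeff_one_sub_X_pow, ← BuniP_sub_BuniM, ← BuniP_add_BuniM, coeff_add, coeff_sub]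
  ring

lemma two_mul_coeff_BuniM (n k : ℕ) : 2 * (BuniM n).coeff k =
    (gammaExpansion (typeBGamma n) n).coeff k - (-1) ^ k * n.choose k := by
  rw [← coeff_one_sub_X_pow, ← BuniP_sub_BuniM, ← BuniP_add_BuniM, coeff_add, coeff_sub]
  ring

lemma not_palind_BuniP_of_odd {n : ℕ} (hn : Odd n) (h2 : 2 ≤ n) : ¬ Palind (BuniP n) := by
  have hsupp : ∀ i, n < 2 * i → typeBGamma n i = 0 := fun i => typeBGamma_eq_zero
  have hγ : (typeBGamma n 0 : ℚ) = 1 := by rw [typeBGamma_zero_right, Nat.cast_one]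
  have hn2 : (2 : ℚ) ≤ n := by exact_mod_cast h2
  have h0 := two_mul_coeff_BuniP n 0
  have hlast := two_mul_coeff_BuniP n n
  have hpen := two_mul_coeff_BuniP n (n - 1)
  have hE := mul_choose_le_coeff_gammaExpansion (typeBGamma n) n (n - 1)
  rw [coeff_gammaExpansion_zero, hγ] at h0
  rw [coeff_gammaExpansion_self _ _ hsupp, hγ, hn.neg_one_pow] at hlast
  rw [(Nat.Odd.sub_odd hn odd_one).neg_one_pow] at hpen
  rw [Nat.choose_symm_of_eq_add (by omega : n = n - 1 + 1), Nat.choose_one_right] at hpen hE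
  simp only [pow_zero, Nat.choose_zero_right, Nat.choose_self, Nat.cast_one, one_mul,
    neg_one_mul, hγ] at h0 hlast hpen hE
  refine not_palind_of_coeff (r := 0) (d := n - 1) (by linarith) (by simp) (by linarith)
    (fun k hk => ?_) (by linarith)
  rcases (show k = n ∨ n < k by omega) with rfl | hk
  · linarith
  · have hk' := two_mul_coeff_BuniP n k
    rw [coeff_gammaExpansion_of_lt _ _ hsupp hk, Nat.choose_eq_zero_of_lt hk] at hk'
    simpa using hk'

lemma not_palind_BuniM_of_odd {n : ℕ} (hn : Odd n) (h2 : 2 ≤ n) : ¬ Palind (BuniM n) := by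
  have hsupp : ∀ i, n < 2 * i → typeBGamma n i = 0 := fun i => typeBGamma_eq_zero
  have hγ : (typeBGamma n 0 : ℚ) = 1 := by rw [typeBGamma_zero_right, Nat.cast_one]
  have hn2 : (2 : ℚ) ≤ n := by exact_mod_cast h2
  have h0 := two_mul_coeff_BuniM n 0
  have h1 := two_mul_coeff_BuniM n 1
  have hlast := two_mul_coeff_BuniM n n
  have hE := mul_choose_le_coeff_gammaExpansion (typeBGamma n) n 1
  rw [coeff_gammaExpansion_zero, hγ] at h0
  rw [coeff_gammaExpansion_self _ _ hsupp, hγ, hn.neg_one_pow] at hlast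
  simp only [pow_zero, pow_one, Nat.choose_zero_right, Nat.choose_one_right, Nat.choose_self,
    Nat.cast_one, one_mul, neg_one_mul, hγ] at h0 h1 hlast hE
  refine not_palind_of_coeff (r := 1) (d := n) (by linarith) (fun k hk => ?_) (by linarith)
    (fun k hk => ?_) (by linarith)
  · rw [Nat.lt_one_iff.mp hk]
    linarith
  · have hk' := two_mul_coeff_BuniM n k
    rw [coeff_gammaExpansion_of_lt _ _ hsupp hk, Nat.choose_eq_zero_of_lt hk] at hk'
    simpa using hk'

end Univariate

theorem typeB_gamma_positive_iff_even (n : ℕ) (hn : 2 ≤ n) :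
    (Even n → BivGamma (BbivP n) n ∧ BivGamma (BbivM n) n) ∧
    (Odd n → ¬ Palind (BuniP n) ∧ ¬ Palind (BuniM n)) :=
  ⟨bivGamma_BbivP_BbivM_of_even, fun hodd =>
    ⟨not_palind_BuniP_of_odd hodd hn, not_palind_BuniM_of_odd hodd hn⟩⟩
end

section
/- Let u ∈ S_n ⊆ B_n and let β(u) be the set of 2^n signed permutations obtained by negating entries of u in all possible ways. Then all elements of β(u) have the same parity of the type-D inversion number inv_D; in particular, all of β(u) lies in one of the two parity classes {w : inv_D(w) even} or {w : inv_D(w) odd}, and u has even inv_D iff u is an even permutation. -/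
open Finset

section Aux

lemma bw_pair_eq {n : ℕ} (u : Equiv.Perm (Fin n)) (ε : Fin n → Bool) (i : Fin n) :
    bw (u, ε) (i.1+1) = if ε i then -(((u i : ℕ) : ℤ) + 1) else ((u i : ℕ) : ℤ) + 1 := by
  rw [bw, dif_pos ⟨Nat.le_add_left _ _, i.2⟩]
  rfl

lemma invD_cast {n : ℕ} (u : Equiv.Perm (Fin n)) (ε : Fin n → Bool) :
    ((invD ((u, ε) : SignedPerm n) : ZMod 2)) = (invA u : ZMod 2) := by
  unfold invD invA
  rw [Finset.card_filter, Finset.card_filter, Finset.card_filter]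
  push_cast
  rw [← Finset.sum_add_distrib]
  apply Finset.sum_congr rfl
  intro p _
  by_cases hp : p.1 < p.2
  · have hab : (u p.1 : ℕ) ≠ (u p.2 : ℕ) := by
      intro h
      exact absurd (u.injective (Fin.val_injective h)) hp.ne
    simp only [hp, true_and, bw_pair_eq, Fin.lt_def]
    split_ifs <;> first | decide | (exfalso; omega)
  · simp [hp]

lemma signAux_eq_pow {n : ℕ} (u : Equiv.Perm (Fin n)) :
    Equiv.Perm.signAux u = (-1 : ℤˣ) ^ invA u := by
  unfold Equiv.Perm.signAux
  rw [Finset.prod_ite, Finset.prod_const, Finset.prod_const, one_pow, mul_one]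
  congr 1
  unfold invA
  refine Finset.card_bij' (fun x _ => (x.2, x.1)) (fun p _ => ⟨p.2, p.1⟩) ?_ ?_ ?_ ?_
  · intro x hx
    simp only [Finset.mem_filter, Finset.mem_univ, true_and] at hx ⊢
    obtain ⟨hm, hle⟩ := hx
    have hxlt := Equiv.Perm.mem_finPairsLT.mp hm
    refine ⟨hxlt, lt_of_le_of_ne hle ?_⟩
    intro h
    exact hxlt.ne (u.injective h).symm
  · intro p hp
    simp only [Finset.mem_filter, Finset.mem_univ, true_and] at hp ⊢
    exact ⟨Equiv.Perm.mem_finPairsLT.mpr hp.1, hp.2.le⟩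
  · intro x _; rfl
  · intro p _; rfl

lemma sign_eq_pow {n : ℕ} (u : Equiv.Perm (Fin n)) :
    Equiv.Perm.sign u = (-1 : ℤˣ) ^ invA u := by
  rw [← signAux_eq_pow]
  refine Equiv.Perm.swap_induction_on u ?_ ?_
  · simp [Equiv.Perm.signAux_one]
  · intro f x y hxy ih
    rw [Equiv.Perm.signAux_mul, Equiv.Perm.signAux_swap hxy, map_mul,
      Equiv.Perm.sign_swap hxy, ih]

end Aux

theorem typeD_inversion_parity (n : ℕ) (u : Equiv.Perm (Fin n)) (ε ε' : Fin n → Bool) :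
    invD ((u, ε) : SignedPerm n) % 2 = invD ((u, ε') : SignedPerm n) % 2 ∧
    (Even (invD ((u, fun _ => false) : SignedPerm n)) ↔ Equiv.Perm.sign u = 1) := by
  have key : ∀ ε'' : Fin n → Bool,
      invD ((u, ε'') : SignedPerm n) % 2 = invA u % 2 := by
    intro ε''
    have h := invD_cast u ε''
    rwa [ZMod.natCast_eq_natCast_iff, Nat.ModEq] at h
  constructor
  · rw [key ε, key ε']
  · rw [Nat.even_iff, key (fun _ => false), ← Nat.even_iff, sign_eq_pow]
    constructor
    · intro h; exact h.neg_one_pow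
    · intro h
      by_contra hodd
      rw [(Nat.not_even_iff_odd.mp hodd).neg_one_pow] at h
      exact absurd h (by decide)
end
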